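/- arXiv:2501.14505 — 2 statements merged into one kernel-verified Lean document; each statement's English description precedes it below -/
import Mathlib

section
/- Let A and B be n×n complex matrices whose numerical ranges are contained in the sector S_α for some α ∈ [0, π/2), and let q ∈ ℂ with 0 < |q| ≤ 1. Then |q|²·w_q(AB) ≤ sec²(α)·w_q(A)·w_q(B). -/
/-!
A sectorial `T` with half-angle `α < π/2` is a combination, with unimodular coefficients, of
the two positive operators `2 Re (e^{± i (π/2 - α)} T)`. Applying Cauchy–Schwarz to each of them
gives `cos α |⟪y, T x⟫| ≤ √(Re ⟪x, T x⟫) √(Re ⟪y, T y⟫)`, and testing this against `y = T x`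
yields `cos α ‖T‖ ≤ w(T)`. On the other hand `|q| w(T) ≤ w_q(T)`: for a unit vector `x` and
`v ⊥ x` with `‖v‖² = 1 - |q|²`, both `q̄ x ± v` are admissible for `w_q`, and by the triangle
inequality one of them gives `|⟪y, T x⟫| ≥ |q| |⟪x, T x⟫|`. Hence `|q| cos α ‖T‖ ≤ w_q(T)`, and
`|q|² w_q(AB) ≤ |q|² ‖A‖ ‖B‖ ≤ sec² α w_q(A) w_q(B)`.
-/

noncomputable def qNumRadius {H : Type*} [NormedAddCommGroup H] [InnerProductSpace ℂ H]
    (q : ℂ) (T : H →L[ℂ] H) : ℝ :=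
  sSup {r : ℝ | ∃ x y : H, ‖x‖ = 1 ∧ ‖y‖ = 1 ∧ (inner ℂ y x : ℂ) = q ∧
    r = ‖(inner ℂ y (T x) : ℂ)‖}

noncomputable def numRadius {H : Type*} [NormedAddCommGroup H] [InnerProductSpace ℂ H]
    (T : H →L[ℂ] H) : ℝ :=
  sSup {r : ℝ | ∃ x : H, ‖x‖ = 1 ∧ r = ‖(inner ℂ x (T x) : ℂ)‖}

/-- The continuous linear map on Euclidean space associated to a matrix. -/
noncomputable def mCLM {n : ℕ} (A : Matrix (Fin n) (Fin n) ℂ) :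
    EuclideanSpace ℂ (Fin n) →L[ℂ] EuclideanSpace ℂ (Fin n) :=
  Matrix.toEuclideanCLM (𝕜 := ℂ) A

/-- The numerical range of `A` is contained in the sector `S_α`. -/
def InSector {n : ℕ} (α : ℝ) (A : Matrix (Fin n) (Fin n) ℂ) : Prop :=
  ∀ x : EuclideanSpace ℂ (Fin n), ‖x‖ = 1 →
    0 < (inner ℂ x (mCLM A x) : ℂ).re ∧
      |(inner ℂ x (mCLM A x) : ℂ).im| ≤ Real.tan α * (inner ℂ x (mCLM A x) : ℂ).re

open ComplexConjugate RCLike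
open scoped InnerProductSpace

theorem Real.sqrt_mul_sqrt_add_sqrt_mul_sqrt_le {a b c d : ℝ} (ha : 0 ≤ a) (hb : 0 ≤ b)
    (hc : 0 ≤ c) (hd : 0 ≤ d) : √a * √b + √c * √d ≤ √(a + c) * √(b + d) := by
  simpa [Fin.sum_univ_two] using
    Real.sum_sqrt_mul_sqrt_le Finset.univ (f := ![a, c]) (g := ![b, d])
      (by simp [Fin.forall_fin_two, ha, hc]) (by simp [Fin.forall_fin_two, hb, hd])

theorem ContinuousLinearMap.IsPositive.norm_inner_le_sqrt_mul_sqrt {𝕜 H : Type*} [RCLike 𝕜]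
    [NormedAddCommGroup H] [InnerProductSpace 𝕜 H] {M : H →L[𝕜] H} (hM : M.IsPositive)
    (x y : H) : ‖inner 𝕜 y (M x)‖ ≤ √(re (inner 𝕜 x (M x))) * √(re (inner 𝕜 y (M y))) := by
  let form : PreInnerProductSpace.Core 𝕜 H :=
    { inner u v := inner 𝕜 u (M v)
      conj_inner_symm u v := by rw [inner_conj_symm, hM.inner_left_eq_inner_right]
      re_inner_nonneg := hM.re_inner_nonneg_right
      add_left u v w := inner_add_left u v (M w)
      smul_left u v r := inner_smul_left u (M v) r }
  have h : ‖inner 𝕜 x (M y)‖ * ‖inner 𝕜 y (M x)‖ ≤ re (inner 𝕜 x (M x)) * re (inner 𝕜 y (M y)) :=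
    @InnerProductSpace.Core.inner_mul_inner_self_le 𝕜 H _ _ _ form x y
  rw [← hM.inner_left_eq_inner_right, ← inner_conj_symm, RCLike.norm_conj, ← sq] at h
  rw [← Real.sqrt_mul (hM.re_inner_nonneg_right x)]
  exact Real.le_sqrt_of_sq_le h

section Sectorial

variable {H : Type*} [NormedAddCommGroup H] [InnerProductSpace ℂ H]

def IsSectorial (α : ℝ) (T : H →L[ℂ] H) : Prop :=
  ∀ x, 0 ≤ (⟪x, T x⟫_ℂ).re ∧ |(⟪x, T x⟫_ℂ).im| ≤ Real.tan α * (⟪x, T x⟫_ℂ).re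

theorem exists_norm_eq_one_inner_apply_self_eq (T : H →L[ℂ] H) {x : H} (hx : x ≠ 0) :
    ∃ u : H, ‖u‖ = 1 ∧ ⟪x, T x⟫_ℂ = ‖x‖ ^ 2 • ⟪u, T u⟫_ℂ := by
  have hx' : (‖x‖ : ℂ) ≠ 0 := by exact_mod_cast norm_ne_zero_iff.2 hx
  refine ⟨(‖x‖⁻¹ : ℂ) • x, by simp [norm_smul, hx], ?_⟩
  simp only [map_smul, inner_smul_left, inner_smul_right, map_inv₀, Complex.conj_ofReal,
    Complex.real_smul]
  field_simp
  push_cast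
  ring

theorem isSectorial_of_norm_eq_one {α : ℝ} {T : H →L[ℂ] H}
    (h : ∀ x, ‖x‖ = 1 →
      0 ≤ (⟪x, T x⟫_ℂ).re ∧ |(⟪x, T x⟫_ℂ).im| ≤ Real.tan α * (⟪x, T x⟫_ℂ).re) :
    IsSectorial α T := by
  intro x
  rcases eq_or_ne x 0 with rfl | hx
  · simp
  obtain ⟨u, hu, hxu⟩ := exists_norm_eq_one_inner_apply_self_eq T hx
  obtain ⟨hre, him⟩ := h u hu
  rw [hxu, Complex.smul_re, Complex.smul_im, smul_eq_mul, smul_eq_mul, abs_mul, abs_sq]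
  constructor
  · positivity
  · nlinarith [sq_nonneg ‖x‖]

theorem IsSectorial.isPositive {T : H →L[ℂ] H} (hT : IsSectorial 0 T) : T.IsPositive := by
  rw [ContinuousLinearMap.isPositive_iff_complex]
  intro x
  obtain ⟨hre, him⟩ := hT x
  rw [Real.tan_zero, zero_mul, abs_nonpos_iff] at him
  rw [← inner_conj_symm, RCLike.conj_re]
  refine ⟨?_, hre⟩
  apply Complex.ext <;>
    simp only [RCLike.re_to_complex, Complex.ofReal_re, Complex.ofReal_im, Complex.conj_re,
      Complex.conj_im, him, neg_zero]

theorem IsSectorial.cos_mul_abs_im_le {α : ℝ} {T : H →L[ℂ] H} (hT : IsSectorial α T)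
    (hc : 0 < Real.cos α) (x : H) :
    Real.cos α * |(⟪x, T x⟫_ℂ).im| ≤ Real.sin α * (⟪x, T x⟫_ℂ).re := by
  have h := (hT x).2
  rw [Real.tan_eq_sin_div_cos, div_mul_eq_mul_div, le_div_iff₀ hc] at h
  linarith

variable [CompleteSpace H]

noncomputable def doubleRealPart (ω : ℂ) (T : H →L[ℂ] H) : H →L[ℂ] H :=
  ω • T + star (ω • T)

theorem inner_doubleRealPart_apply (ω : ℂ) (T : H →L[ℂ] H) (x y : H) :
    ⟪y, doubleRealPart ω T x⟫_ℂ = ω * ⟪y, T x⟫_ℂ + conj ω * ⟪T y, x⟫_ℂ := by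
  simp [doubleRealPart, ContinuousLinearMap.star_eq_adjoint,
    ContinuousLinearMap.adjoint_inner_right]

theorem inner_doubleRealPart_apply_self (ω : ℂ) (T : H →L[ℂ] H) (x : H) :
    ⟪x, doubleRealPart ω T x⟫_ℂ = (2 * (ω * ⟪x, T x⟫_ℂ).re : ℝ) := by
  rw [inner_doubleRealPart_apply, ← inner_conj_symm (T x) x, ← map_mul, Complex.add_conj]

theorem isPositive_doubleRealPart {ω : ℂ} {T : H →L[ℂ] H}
    (h : ∀ x, 0 ≤ (ω * ⟪x, T x⟫_ℂ).re) : (doubleRealPart ω T).IsPositive := by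
  refine ContinuousLinearMap.isPositive_def'.2 ⟨.add_star_self _, fun x => ?_⟩
  rw [ContinuousLinearMap.reApplyInnerSelf_apply, ← inner_conj_symm, RCLike.conj_re,
    inner_doubleRealPart_apply_self]
  simpa using h x

theorem mul_inner_apply_eq_doubleRealPart (ω : ℂ) (T : H →L[ℂ] H) (x y : H) :
    (2 * (ω ^ 2).im : ℝ) * ⟪y, T x⟫_ℂ = -Complex.I * ω * ⟪y, doubleRealPart ω T x⟫_ℂ
      + Complex.I * conj ω * ⟪y, doubleRealPart (conj ω) T x⟫_ℂ := by
  rw [inner_doubleRealPart_apply, inner_doubleRealPart_apply, Complex.conj_conj]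
  have h := Complex.sub_conj (ω ^ 2)
  rw [map_pow] at h
  push_cast at h ⊢
  linear_combination (Complex.I * ⟪y, T x⟫_ℂ) * h
    + (2 * ((ω ^ 2).im : ℂ) * ⟪y, T x⟫_ℂ) * Complex.I_sq

theorem IsSectorial.cos_mul_norm_inner_le_of_pos {α : ℝ} {T : H →L[ℂ] H} (hT : IsSectorial α T)
    (hα0 : 0 < α) (hα : α < Real.pi / 2) (x y : H) :
    Real.cos α * ‖⟪y, T x⟫_ℂ‖ ≤ √((⟪x, T x⟫_ℂ).re) * √((⟪y, T y⟫_ℂ).re) := by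
  have hs : 0 < Real.sin α := Real.sin_pos_of_pos_of_lt_pi hα0 (by linarith [Real.pi_pos])
  have hc : 0 < Real.cos α := Real.cos_pos_of_mem_Ioo ⟨by linarith, hα⟩
  have hsector := hT.cos_mul_abs_im_le hc
  have hsc : Real.sin α ^ 2 + Real.cos α ^ 2 = 1 := Real.sin_sq_add_cos_sq α
  set s := Real.sin α
  set c := Real.cos α
  -- `ω = e^{i (π/2 - α)}`: multiplying by `ω` or `ω̄` turns the sector into a half-plane
  set ω : ℂ := s + c * Complex.I
  have hω : ‖ω‖ = 1 := by rw [Complex.norm_add_mul_I, hsc, Real.sqrt_one]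
  have hω2 : (ω ^ 2).im = 2 * s * c := by
    simp only [ω, sq, Complex.mul_im, Complex.mul_re, Complex.add_re, Complex.add_im,
      Complex.ofReal_re, Complex.ofReal_im, Complex.I_re, Complex.I_im]
    ring
  have hre : ∀ z : ℂ, (ω * z).re = s * z.re - c * z.im ∧ (conj ω * z).re = s * z.re + c * z.im :=
    fun z => by simp [ω]
  set P := doubleRealPart ω T
  set Q := doubleRealPart (conj ω) T
  have hP : P.IsPositive := isPositive_doubleRealPart fun u => by
    rw [(hre _).1]; nlinarith [le_abs_self (⟪u, T u⟫_ℂ).im, hsector u]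
  have hQ : Q.IsPositive := isPositive_doubleRealPart fun u => by
    rw [(hre _).2]; nlinarith [neg_abs_le (⟪u, T u⟫_ℂ).im, hsector u]
  have hPQ : ∀ u, √((⟪u, P u⟫_ℂ).re + (⟪u, Q u⟫_ℂ).re) = √(4 * s) * √((⟪u, T u⟫_ℂ).re) :=
    fun u => by
      rw [inner_doubleRealPart_apply_self, inner_doubleRealPart_apply_self, Complex.ofReal_re,
        Complex.ofReal_re, (hre _).1, (hre _).2, ← Real.sqrt_mul (by positivity)]
      ring_nf
  have hmain : 4 * s * c * ‖⟪y, T x⟫_ℂ‖ ≤ 4 * s * (√((⟪x, T x⟫_ℂ).re) * √((⟪y, T y⟫_ℂ).re)) :=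
    calc 4 * s * c * ‖⟪y, T x⟫_ℂ‖ = ‖((2 * (ω ^ 2).im : ℝ) : ℂ) * ⟪y, T x⟫_ℂ‖ := by
          rw [norm_mul, Complex.norm_real, hω2, Real.norm_of_nonneg (by positivity)]
          ring
      _ ≤ ‖⟪y, P x⟫_ℂ‖ + ‖⟪y, Q x⟫_ℂ‖ := by
          rw [mul_inner_apply_eq_doubleRealPart]
          refine (norm_add_le _ _).trans_eq ?_
          simp only [norm_mul, norm_neg, Complex.norm_I, Complex.norm_conj, hω, one_mul]
          rfl
      _ ≤ √((⟪x, P x⟫_ℂ).re) * √((⟪y, P y⟫_ℂ).re) + √((⟪x, Q x⟫_ℂ).re) * √((⟪y, Q y⟫_ℂ).re) :=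
          add_le_add (hP.norm_inner_le_sqrt_mul_sqrt x y) (hQ.norm_inner_le_sqrt_mul_sqrt x y)
      _ ≤ √((⟪x, P x⟫_ℂ).re + (⟪x, Q x⟫_ℂ).re) * √((⟪y, P y⟫_ℂ).re + (⟪y, Q y⟫_ℂ).re) :=
          Real.sqrt_mul_sqrt_add_sqrt_mul_sqrt_le (hP.re_inner_nonneg_right x)
            (hP.re_inner_nonneg_right y) (hQ.re_inner_nonneg_right x) (hQ.re_inner_nonneg_right y)
      _ = 4 * s * (√((⟪x, T x⟫_ℂ).re) * √((⟪y, T y⟫_ℂ).re)) := by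
          rw [hPQ, hPQ, mul_mul_mul_comm, Real.mul_self_sqrt (by positivity)]
  rw [mul_assoc] at hmain
  exact le_of_mul_le_mul_left hmain (by positivity)

theorem IsSectorial.cos_mul_norm_inner_le {α : ℝ} {T : H →L[ℂ] H} (hT : IsSectorial α T)
    (hα0 : 0 ≤ α) (hα : α < Real.pi / 2) (x y : H) :
    Real.cos α * ‖⟪y, T x⟫_ℂ‖ ≤ √((⟪x, T x⟫_ℂ).re) * √((⟪y, T y⟫_ℂ).re) := by
  rcases hα0.eq_or_lt with rfl | hα0
  · simpa using hT.isPositive.norm_inner_le_sqrt_mul_sqrt x y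
  · exact hT.cos_mul_norm_inner_le_of_pos hα0 hα x y

end Sectorial

section NumericalRadius

variable {H : Type*} [NormedAddCommGroup H] [InnerProductSpace ℂ H]

theorem norm_inner_apply_le_opNorm (T : H →L[ℂ] H) {x y : H} (hx : ‖x‖ = 1) (hy : ‖y‖ = 1) :
    ‖⟪y, T x⟫_ℂ‖ ≤ ‖T‖ :=
  (norm_inner_le_norm y (T x)).trans (by simpa [hx, hy] using T.le_opNorm x)

theorem numRadius_nonneg (T : H →L[ℂ] H) : 0 ≤ numRadius T :=
  Real.sSup_nonneg (by rintro _ ⟨x, -, rfl⟩; exact norm_nonneg _)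

theorem numRadius_le (T : H →L[ℂ] H) {c : ℝ} (hc : 0 ≤ c)
    (h : ∀ x : H, ‖x‖ = 1 → ‖⟪x, T x⟫_ℂ‖ ≤ c) : numRadius T ≤ c :=
  Real.sSup_le (by rintro _ ⟨x, hx, rfl⟩; exact h x hx) hc

theorem norm_inner_apply_self_le_numRadius (T : H →L[ℂ] H) {x : H} (hx : ‖x‖ = 1) :
    ‖⟪x, T x⟫_ℂ‖ ≤ numRadius T :=
  le_csSup ⟨‖T‖, by rintro _ ⟨u, hu, rfl⟩; exact norm_inner_apply_le_opNorm T hu hu⟩ ⟨x, hx, rfl⟩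

theorem norm_inner_apply_self_le_numRadius_mul (T : H →L[ℂ] H) (x : H) :
    ‖⟪x, T x⟫_ℂ‖ ≤ numRadius T * ‖x‖ ^ 2 := by
  rcases eq_or_ne x 0 with rfl | hx
  · simp
  obtain ⟨u, hu, hxu⟩ := exists_norm_eq_one_inner_apply_self_eq T hx
  rw [hxu, norm_smul, Real.norm_of_nonneg (by positivity), mul_comm]
  exact mul_le_mul_of_nonneg_right (norm_inner_apply_self_le_numRadius T hu) (by positivity)

theorem IsSectorial.cos_mul_opNorm_le_numRadius [CompleteSpace H] {α : ℝ} {T : H →L[ℂ] H}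
    (hT : IsSectorial α T) (hα0 : 0 ≤ α) (hα : α < Real.pi / 2) :
    Real.cos α * ‖T‖ ≤ numRadius T := by
  have hc : 0 < Real.cos α := Real.cos_pos_of_mem_Ioo ⟨by linarith [Real.pi_pos], hα⟩
  have hw := numRadius_nonneg T
  have hsqrt : ∀ u, √((⟪u, T u⟫_ℂ).re) ≤ √(numRadius T) * ‖u‖ := fun u => by
    rw [← Real.sqrt_sq (norm_nonneg u), ← Real.sqrt_mul hw]
    exact Real.sqrt_le_sqrt
      ((Complex.re_le_norm _).trans (norm_inner_apply_self_le_numRadius_mul T u))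
  rw [mul_comm, ← le_div_iff₀ hc]
  refine T.opNorm_le_bound (by positivity) fun x => ?_
  rw [div_mul_eq_mul_div, le_div_iff₀ hc]
  rcases (norm_nonneg (T x)).eq_or_lt with hTx | hTx
  · rw [← hTx, zero_mul]; positivity
  -- Test the sector estimate against `y = T x`.
  have key : ‖T x‖ * Real.cos α * ‖T x‖ ≤ numRadius T * ‖x‖ * ‖T x‖ :=
    calc ‖T x‖ * Real.cos α * ‖T x‖ = Real.cos α * ‖⟪T x, T x⟫_ℂ‖ := by
          rw [inner_self_eq_norm_sq_to_K, norm_pow, RCLike.norm_ofReal, abs_norm]; ring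
      _ ≤ √((⟪x, T x⟫_ℂ).re) * √((⟪T x, T (T x)⟫_ℂ).re) := hT.cos_mul_norm_inner_le hα0 hα x (T x)
      _ ≤ (√(numRadius T) * ‖x‖) * (√(numRadius T) * ‖T x‖) :=
          mul_le_mul (hsqrt x) (hsqrt (T x)) (Real.sqrt_nonneg _) (by positivity)
      _ = numRadius T * ‖x‖ * ‖T x‖ := by
          rw [mul_mul_mul_comm, Real.mul_self_sqrt hw]; ring
  exact le_of_mul_le_mul_right key hTx

variable (H) in
def ExistsUnitPairInnerEq (q : ℂ) : Prop :=
  ∃ x y : H, ‖x‖ = 1 ∧ ‖y‖ = 1 ∧ ⟪y, x⟫_ℂ = q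

theorem qNumRadius_nonneg (q : ℂ) (T : H →L[ℂ] H) : 0 ≤ qNumRadius q T :=
  Real.sSup_nonneg (by rintro _ ⟨x, y, -, -, -, rfl⟩; exact norm_nonneg _)

theorem qNumRadius_le_opNorm (q : ℂ) (T : H →L[ℂ] H) : qNumRadius q T ≤ ‖T‖ :=
  Real.sSup_le (by rintro _ ⟨x, y, hx, hy, -, rfl⟩; exact norm_inner_apply_le_opNorm T hx hy)
    (norm_nonneg T)

theorem le_qNumRadius {q : ℂ} (T : H →L[ℂ] H) {x y : H} (hx : ‖x‖ = 1) (hy : ‖y‖ = 1)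
    (hyx : ⟪y, x⟫_ℂ = q) : ‖⟪y, T x⟫_ℂ‖ ≤ qNumRadius q T :=
  le_csSup ⟨‖T‖, by rintro _ ⟨u, v, hu, hv, -, rfl⟩; exact norm_inner_apply_le_opNorm T hu hv⟩
    ⟨x, y, hx, hy, hyx, rfl⟩

theorem qNumRadius_eq_zero {q : ℂ}
    (h : ¬ExistsUnitPairInnerEq H q) (T : H →L[ℂ] H) : qNumRadius q T = 0 :=
  (congrArg sSup (Set.eq_empty_of_forall_notMem <| by
    rintro _ ⟨x, y, hx, hy, hyx, -⟩; exact h ⟨x, y, hx, hy, hyx⟩)).trans Real.sSup_empty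

theorem exists_ne_zero_inner_eq_zero {q : ℂ}
    (hex : ExistsUnitPairInnerEq H q) (hq : ‖q‖ < 1) (x : H) :
    ∃ w ≠ 0, ⟪w, x⟫_ℂ = 0 := by
  obtain ⟨x₀, y₀, hx₀, hy₀, rfl⟩ := hex
  by_contra! h
  -- otherwise `x` spans `H`, so `x₀`, `y₀` are parallel and `‖q‖ = 1`
  have htop : (ℂ ∙ x) = ⊤ := by
    rw [← Submodule.orthogonal_eq_bot_iff, Submodule.eq_bot_iff]
    intro w hw
    by_contra hw0
    exact h w hw0 (Submodule.mem_orthogonal_singleton_iff_inner_left.1 hw)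
  obtain ⟨a, rfl⟩ := Submodule.mem_span_singleton.1 (htop ▸ Submodule.mem_top : x₀ ∈ ℂ ∙ x)
  obtain ⟨b, rfl⟩ := Submodule.mem_span_singleton.1 (htop ▸ Submodule.mem_top : y₀ ∈ ℂ ∙ x)
  have : ‖⟪b • x, a • x⟫_ℂ‖ = ‖b • x‖ * ‖a • x‖ := by
    rw [inner_smul_left, inner_smul_right, norm_mul, norm_mul, RCLike.norm_conj,
      inner_self_eq_norm_sq_to_K, norm_pow, RCLike.norm_ofReal, abs_norm, norm_smul, norm_smul]
    ring
  rw [this, hx₀, hy₀, mul_one] at hq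
  exact lt_irrefl _ hq

theorem exists_inner_eq_zero_norm_sq_eq {q : ℂ}
    (hex : ExistsUnitPairInnerEq H q) (hq1 : ‖q‖ ≤ 1) (x : H) :
    ∃ v : H, ⟪v, x⟫_ℂ = 0 ∧ ‖v‖ ^ 2 = 1 - ‖q‖ ^ 2 := by
  rcases hq1.eq_or_lt with hq | hq
  · exact ⟨0, by simp, by simp [hq]⟩
  obtain ⟨w, hw, hwx⟩ := exists_ne_zero_inner_eq_zero hex hq x
  have hw' : ‖w‖ ≠ 0 := norm_ne_zero_iff.2 hw
  refine ⟨((√(1 - ‖q‖ ^ 2) / ‖w‖ : ℝ) : ℂ) • w, by simp [hwx], ?_⟩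
  rw [norm_smul, Complex.norm_real, Real.norm_of_nonneg (by positivity), div_mul_cancel₀ _ hw',
    Real.sq_sqrt (by nlinarith [norm_nonneg q])]

theorem norm_mul_norm_inner_apply_self_le_qNumRadius {q : ℂ}
    (hex : ExistsUnitPairInnerEq H q) (hq1 : ‖q‖ ≤ 1)
    (T : H →L[ℂ] H) {x : H} (hx : ‖x‖ = 1) : ‖q‖ * ‖⟪x, T x⟫_ℂ‖ ≤ qNumRadius q T := by
  obtain ⟨v, hvx, hv⟩ := exists_inner_eq_zero_norm_sq_eq hex hq1 x
  -- both `y = conj q • x ± v` are admissible for `q`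
  have hy : ∀ u : H, ⟪u, x⟫_ℂ = 0 → ‖u‖ ^ 2 = 1 - ‖q‖ ^ 2 →
      ‖q * ⟪x, T x⟫_ℂ + ⟪u, T x⟫_ℂ‖ ≤ qNumRadius q T := fun u hux hu => by
    have hxu : ⟪conj q • x, u⟫_ℂ = 0 := by
      rw [inner_smul_left, inner_eq_zero_symm.1 hux, mul_zero]
    have hnorm : ‖conj q • x + u‖ = 1 := by
      have := norm_add_sq_eq_norm_sq_add_norm_sq_of_inner_eq_zero _ _ hxu
      rw [norm_smul, Complex.norm_conj, hx, mul_one] at this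
      nlinarith [norm_nonneg (conj q • x + u)]
    have hinner : ⟪conj q • x + u, x⟫_ℂ = q := by
      simp [hux, inner_self_eq_norm_sq_to_K, hx]
    have := le_qNumRadius T hx hnorm hinner
    rwa [inner_add_left, inner_smul_left, Complex.conj_conj] at this
  have hplus := hy v hvx hv
  have hminus := hy (-v) (by simp [hvx]) (by simpa using hv)
  rw [inner_neg_left, ← sub_eq_add_neg] at hminus
  have htwo : 2 * (‖q‖ * ‖⟪x, T x⟫_ℂ‖)
      ≤ ‖q * ⟪x, T x⟫_ℂ + ⟪v, T x⟫_ℂ‖ + ‖q * ⟪x, T x⟫_ℂ - ⟪v, T x⟫_ℂ‖ :=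
    calc 2 * (‖q‖ * ‖⟪x, T x⟫_ℂ‖)
        = ‖(q * ⟪x, T x⟫_ℂ + ⟪v, T x⟫_ℂ) + (q * ⟪x, T x⟫_ℂ - ⟪v, T x⟫_ℂ)‖ := by
          rw [add_add_sub_cancel, ← two_mul, norm_mul, norm_mul]; norm_num
      _ ≤ _ := norm_add_le _ _
  linarith

theorem norm_mul_numRadius_le_qNumRadius {q : ℂ}
    (hex : ExistsUnitPairInnerEq H q) (hq1 : ‖q‖ ≤ 1)
    (T : H →L[ℂ] H) : ‖q‖ * numRadius T ≤ qNumRadius q T := by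
  rcases (norm_nonneg q).eq_or_lt with hq | hq
  · rw [← hq, zero_mul]; exact qNumRadius_nonneg q T
  rw [mul_comm, ← le_div_iff₀ hq]
  refine numRadius_le T (div_nonneg (qNumRadius_nonneg q T) hq.le) fun x hx => ?_
  rw [le_div_iff₀ hq, mul_comm]
  exact norm_mul_norm_inner_apply_self_le_qNumRadius hex hq1 T hx

theorem IsSectorial.norm_mul_cos_mul_opNorm_le_qNumRadius [CompleteSpace H] {α : ℝ} {q : ℂ}
    {T : H →L[ℂ] H} (hT : IsSectorial α T) (hα0 : 0 ≤ α) (hα : α < Real.pi / 2)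
    (hex : ExistsUnitPairInnerEq H q) (hq1 : ‖q‖ ≤ 1) :
    ‖q‖ * (Real.cos α * ‖T‖) ≤ qNumRadius q T :=
  (mul_le_mul_of_nonneg_left (hT.cos_mul_opNorm_le_numRadius hα0 hα) (norm_nonneg q)).trans
    (norm_mul_numRadius_le_qNumRadius hex hq1 T)

end NumericalRadius

theorem InSector.isSectorial {n : ℕ} {α : ℝ} {A : Matrix (Fin n) (Fin n) ℂ}
    (hA : InSector α A) : IsSectorial α (mCLM A) :=
  isSectorial_of_norm_eq_one fun x hx => ⟨(hA x hx).1.le, (hA x hx).2⟩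

theorem mCLM_mul {n : ℕ} (A B : Matrix (Fin n) (Fin n) ℂ) : mCLM (A * B) = mCLM A * mCLM B :=
  map_mul _ A B

theorem stmt3_general {n : ℕ} (A B : Matrix (Fin n) (Fin n) ℂ) (α : ℝ)
    (hα : 0 ≤ α ∧ α < Real.pi / 2) (hA : InSector α A) (hB : InSector α B)
    (q : ℂ) (hq1 : ‖q‖ ≤ 1) :
    ‖q‖ ^ 2 * qNumRadius q (mCLM (A * B)) ≤
      (Real.cos α)⁻¹ ^ 2 * qNumRadius q (mCLM A) * qNumRadius q (mCLM B) := by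
  by_cases hex : ExistsUnitPairInnerEq (EuclideanSpace ℂ (Fin n)) q
  swap
  · -- no admissible pair: every `w_q` is `sSup ∅ = 0`
    simp [qNumRadius_eq_zero hex]
  obtain ⟨hα0, hα⟩ := hα
  have hc : 0 < Real.cos α := Real.cos_pos_of_mem_Ioo ⟨by linarith [Real.pi_pos], hα⟩
  have hAq := hA.isSectorial.norm_mul_cos_mul_opNorm_le_qNumRadius hα0 hα hex hq1
  have hBq := hB.isSectorial.norm_mul_cos_mul_opNorm_le_qNumRadius hα0 hα hex hq1
  calc ‖q‖ ^ 2 * qNumRadius q (mCLM (A * B))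
      ≤ ‖q‖ ^ 2 * (‖mCLM A‖ * ‖mCLM B‖) := by
        rw [mCLM_mul]
        gcongr
        exact (qNumRadius_le_opNorm q _).trans (norm_mul_le _ _)
    _ = (Real.cos α)⁻¹ ^ 2 *
          ((‖q‖ * (Real.cos α * ‖mCLM A‖)) * (‖q‖ * (Real.cos α * ‖mCLM B‖))) := by
        field_simp
    _ ≤ (Real.cos α)⁻¹ ^ 2 * (qNumRadius q (mCLM A) * qNumRadius q (mCLM B)) := by
        gcongr
        exact qNumRadius_nonneg q _
    _ = (Real.cos α)⁻¹ ^ 2 * qNumRadius q (mCLM A) * qNumRadius q (mCLM B) := by ring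

theorem stmt3 {n : ℕ} (A B : Matrix (Fin n) (Fin n) ℂ) (α : ℝ)
    (hα : 0 ≤ α ∧ α < Real.pi / 2) (hA : InSector α A) (hB : InSector α B)
    (q : ℂ) (hq : 0 < ‖q‖) (hq1 : ‖q‖ ≤ 1) :
    ‖q‖ ^ 2 * qNumRadius q (mCLM (A * B)) ≤
      (Real.cos α)⁻¹ ^ 2 * qNumRadius q (mCLM A) * qNumRadius q (mCLM B) :=
  stmt3_general A B α hα hA hB q hq1
end

section
/- Let A be an n×n complex matrix whose numerical range is contained in the sector S_α for some α ∈ [0, π/2), and let q ∈ ℂ with |q| ≤ 1. Then w_q(A) ≤ (√((1−|q|²)(1+2sin²(α))) + |q|)·w(A). -/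
/-!
Write `y = conj q • x + p` with `p ⟂ x` and `‖p‖ = √(1 - |q|²)`. For every scalar `c`,
`⟪y, T x⟫ = q ⟪x, T x⟫ + ⟪p, (T - c) x⟫`, hence `w_q(T) ≤ |q| w(T) + √(1 - |q|²) ‖T - c‖`.
Take `c = w(T) / 2` and split `T - c = (ℜ T - c) + i ℑ T`. Both parts are self-adjoint, so their
norms equal their numerical radii: `0 ≤ Re ⟪x, T x⟫ ≤ w(T)` puts the numerical range of `ℜ T - c`
in `[-w(T)/2, w(T)/2]`, and the sector condition puts that of `ℑ T` in `[-sin α w(T), sin α w(T)]`.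
Thus `‖T - c‖ ≤ (1/2 + sin α) w(T) ≤ √(1 + 2 sin² α) w(T)`.
-/

open scoped InnerProductSpace ComplexStarModule

section InnerProductSpace

variable {𝕜 H : Type*} [RCLike 𝕜] [NormedAddCommGroup H] [InnerProductSpace 𝕜 H]

theorem ContinuousLinearMap.norm_le_of_abs_re_inner_le {S : H →L[𝕜] H}
    (hS : (S : H →ₗ[𝕜] H).IsSymmetric) {M : ℝ} (hM : 0 ≤ M)
    (h : ∀ v, |RCLike.re ⟪S v, v⟫_𝕜| ≤ M * ‖v‖ ^ 2) : ‖S‖ ≤ M := by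
  rw [S.norm_eq_iSup_rayleighQuotient hS]
  refine ciSup_le fun v => ?_
  rw [rayleighQuotient, reApplyInnerSelf_apply, abs_div, abs_sq]
  exact div_le_of_le_mul₀ (by positivity) hM (h v)

theorem norm_inner_le_of_norm_eq_one {x y : H} (hx : ‖x‖ = 1) (hy : ‖y‖ = 1) (v : H) (c : 𝕜) :
    ‖⟪y, v⟫_𝕜‖ ≤ ‖⟪y, x⟫_𝕜‖ * ‖⟪x, v⟫_𝕜‖ + √(1 - ‖⟪y, x⟫_𝕜‖ ^ 2) * ‖v - c • x‖ := by
  set p := y - ⟪x, y⟫_𝕜 • x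
  have hxp : ⟪x, p⟫_𝕜 = 0 := by simp [p, inner_sub_right, inner_smul_right, hx]
  have hp : ‖p‖ = √(1 - ‖⟪y, x⟫_𝕜‖ ^ 2) := by
    have := norm_add_sq_eq_norm_sq_add_norm_sq_of_inner_eq_zero (⟪x, y⟫_𝕜 • x) p
      (by rw [inner_smul_left, hxp, mul_zero])
    rw [add_sub_cancel, hy, norm_smul, hx, mul_one, norm_inner_symm] at this
    rw [← Real.sqrt_sq (norm_nonneg p)]
    congr 1
    linarith
  have hsplit : ⟪y, v⟫_𝕜 = ⟪y, x⟫_𝕜 * ⟪x, v⟫_𝕜 + ⟪p, v - c • x⟫_𝕜 := by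
    simp [p, inner_sub_left, inner_sub_right, inner_smul_left, inner_smul_right, hx]
  rw [hsplit, ← hp]
  refine (norm_add_le _ _).trans ?_
  rw [norm_mul]
  gcongr
  exact norm_inner_le_norm _ _

end InnerProductSpace

/-- The sector `|arg z| ≤ α` for `s = sin α`, i.e. the closure of the paper's `S_α`. -/
def closedSector (s : ℝ) : Set ℂ := {z | 0 ≤ z.re ∧ |z.im| ≤ s * ‖z‖}

theorem mem_closedSector_sin {α : ℝ} (hα₀ : 0 ≤ α) (hα : α < Real.pi / 2) {z : ℂ}
    (hre : 0 ≤ z.re) (him : |z.im| ≤ Real.tan α * z.re) : z ∈ closedSector (Real.sin α) := by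
  have hcos : 0 < Real.cos α := Real.cos_pos_of_mem_Ioo ⟨by linarith [Real.pi_pos], hα⟩
  have hsin : 0 ≤ Real.sin α := Real.sin_nonneg_of_nonneg_of_le_pi hα₀ (by linarith)
  have hcross : Real.cos α * |z.im| ≤ Real.sin α * z.re := by
    rw [Real.tan_eq_sin_div_cos, div_mul_eq_mul_div, le_div_iff₀ hcos] at him
    linarith
  have hcs : Real.sin α * |z.im| + Real.cos α * z.re ≤ ‖z‖ := by
    refine le_of_pow_le_pow_left₀ two_ne_zero (norm_nonneg z) ?_
    rw [Complex.sq_norm, Complex.normSq_apply]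
    nlinarith [sq_abs z.im, Real.sin_sq_add_cos_sq α,
      sq_nonneg (Real.sin α * z.re - Real.cos α * |z.im|)]
  refine ⟨hre, ?_⟩
  calc |z.im| = Real.sin α ^ 2 * |z.im| + Real.cos α * (Real.cos α * |z.im|) := by
        linear_combination (-|z.im|) * Real.sin_sq_add_cos_sq α
    _ ≤ Real.sin α ^ 2 * |z.im| + Real.cos α * (Real.sin α * z.re) := by gcongr
    _ = Real.sin α * (Real.sin α * |z.im| + Real.cos α * z.re) := by ring
    _ ≤ Real.sin α * ‖z‖ := by gcongr

theorem ofReal_mul_mem_closedSector {s r : ℝ} (hr : 0 ≤ r) {z : ℂ} (hz : z ∈ closedSector s) :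
    (r : ℂ) * z ∈ closedSector s := by
  obtain ⟨hre, him⟩ := hz
  refine ⟨by simpa using mul_nonneg hr hre, ?_⟩
  simp only [Complex.im_ofReal_mul, norm_mul, Complex.norm_real, Real.norm_of_nonneg hr, abs_mul,
    abs_of_nonneg hr]
  nlinarith

theorem half_add_le_sqrt_one_add_two_mul_sq (s : ℝ) : 1 / 2 + s ≤ √(1 + 2 * s ^ 2) :=
  (le_abs_self _).trans <| Real.abs_le_sqrt <| by nlinarith [sq_nonneg (s - 1 / 2)]

namespace ContinuousLinearMap

variable {H : Type*} [NormedAddCommGroup H] [InnerProductSpace ℂ H]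

theorem inner_apply_self_eq_norm_sq_mul (T : H →L[ℂ] H) (v : H) :
    ⟪v, T v⟫_ℂ = ((‖v‖ ^ 2 : ℝ) : ℂ) * ⟪(‖v‖⁻¹ : ℂ) • v, T ((‖v‖⁻¹ : ℂ) • v)⟫_ℂ := by
  rcases eq_or_ne v 0 with rfl | hv
  · simp
  have : (‖v‖ : ℂ) ≠ 0 := by simpa using hv
  simp only [map_smul, inner_smul_left, inner_smul_right, map_inv₀, Complex.conj_ofReal]
  push_cast
  field_simp

theorem inner_apply_self_mem_closedSector {T : H →L[ℂ] H} {s : ℝ}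
    (hT : ∀ x, ‖x‖ = 1 → ⟪x, T x⟫_ℂ ∈ closedSector s) (v : H) : ⟪v, T v⟫_ℂ ∈ closedSector s := by
  rcases eq_or_ne v 0 with rfl | hv
  · simp [closedSector]
  rw [T.inner_apply_self_eq_norm_sq_mul]
  exact ofReal_mul_mem_closedSector (by positivity) (hT _ (norm_smul_inv_norm hv))

theorem numRadius_nonneg (T : H →L[ℂ] H) : 0 ≤ numRadius T :=
  Real.sSup_nonneg <| by rintro _ ⟨x, -, rfl⟩; positivity

theorem norm_inner_apply_self_le_numRadius (T : H →L[ℂ] H) {x : H} (hx : ‖x‖ = 1) :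
    ‖⟪x, T x⟫_ℂ‖ ≤ numRadius T := by
  refine le_csSup ⟨‖T‖, ?_⟩ ⟨x, hx, rfl⟩
  rintro _ ⟨v, hv, rfl⟩
  calc ‖⟪v, T v⟫_ℂ‖ ≤ ‖v‖ * ‖T v‖ := norm_inner_le_norm _ _
    _ ≤ ‖T‖ := by rw [hv, one_mul]; exact T.unit_le_opNorm v hv.le

theorem norm_inner_apply_self_le_numRadius_mul_sq (T : H →L[ℂ] H) (v : H) :
    ‖⟪v, T v⟫_ℂ‖ ≤ numRadius T * ‖v‖ ^ 2 := by
  rcases eq_or_ne v 0 with rfl | hv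
  · simp
  rw [T.inner_apply_self_eq_norm_sq_mul, norm_mul, Complex.norm_real,
    Real.norm_of_nonneg (by positivity), mul_comm]
  gcongr
  exact T.norm_inner_apply_self_le_numRadius (norm_smul_inv_norm hv)

theorem qNumRadius_le_norm_mul_numRadius_add (q : ℂ) (T : H →L[ℂ] H) (c : ℂ) :
    qNumRadius q T ≤ ‖q‖ * numRadius T + √(1 - ‖q‖ ^ 2) * ‖T - c • 1‖ := by
  refine Real.sSup_le ?_ <|
    add_nonneg (mul_nonneg (norm_nonneg q) T.numRadius_nonneg) (by positivity)
  rintro _ ⟨x, y, hx, hy, rfl, rfl⟩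
  calc ‖⟪y, T x⟫_ℂ‖
      ≤ ‖⟪y, x⟫_ℂ‖ * ‖⟪x, T x⟫_ℂ‖ + √(1 - ‖⟪y, x⟫_ℂ‖ ^ 2) * ‖(T - c • 1) x‖ :=
        norm_inner_le_of_norm_eq_one hx hy (T x) c
    _ ≤ ‖⟪y, x⟫_ℂ‖ * numRadius T + √(1 - ‖⟪y, x⟫_ℂ‖ ^ 2) * ‖T - c • 1‖ := by
        gcongr
        · exact T.norm_inner_apply_self_le_numRadius hx
        · exact (T - c • 1).unit_le_opNorm x hx.le

variable [CompleteSpace H]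

theorem re_inner_realPart_apply (T : H →L[ℂ] H) (v : H) :
    (⟪(ℜ T : H →L[ℂ] H) v, v⟫_ℂ).re = (⟪v, T v⟫_ℂ).re := by
  rw [realPart_apply_coe, star_eq_adjoint, ← Complex.coe_smul, smul_apply, add_apply,
    inner_smul_left, inner_add_left, adjoint_inner_left, ← inner_conj_symm (T v) v,
    add_comm (starRingEnd ℂ _), Complex.add_conj]
  simp

theorem re_inner_imaginaryPart_apply (T : H →L[ℂ] H) (v : H) :
    (⟪(ℑ T : H →L[ℂ] H) v, v⟫_ℂ).re = (⟪v, T v⟫_ℂ).im := by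
  rw [imaginaryPart_apply_coe, star_eq_adjoint, ← Complex.coe_smul, smul_apply, smul_apply,
    sub_apply, inner_smul_left, inner_smul_left, inner_sub_left, adjoint_inner_left,
    ← inner_conj_symm (T v) v, ← neg_sub, Complex.sub_conj]
  simp

theorem norm_sub_half_numRadius_smul_one_le {T : H →L[ℂ] H} {s : ℝ} (hs : 0 ≤ s)
    (hT : ∀ v, ⟪v, T v⟫_ℂ ∈ closedSector s) :
    ‖T - ((numRadius T / 2 : ℝ) : ℂ) • 1‖ ≤ (1 / 2 + s) * numRadius T := by
  set w := numRadius T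
  have hw : 0 ≤ w := T.numRadius_nonneg
  have hdecomp : T - ((w / 2 : ℝ) : ℂ) • 1 =
      ((ℜ T : H →L[ℂ] H) - ((w / 2 : ℝ) : ℂ) • 1) + Complex.I • (ℑ T : H →L[ℂ] H) := by
    conv_lhs => rw [← realPart_add_I_smul_imaginaryPart T]
    abel
  have hre : ‖(ℜ T : H →L[ℂ] H) - ((w / 2 : ℝ) : ℂ) • 1‖ ≤ w / 2 := by
    refine norm_le_of_abs_re_inner_le
      ((ℜ T).2.sub (.smul (Complex.conj_ofReal _) (.one _))).isSymmetric
      (by positivity) fun v => ?_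
    have hle : (⟪v, T v⟫_ℂ).re ≤ w * ‖v‖ ^ 2 :=
      (Complex.re_le_norm _).trans (T.norm_inner_apply_self_le_numRadius_mul_sq v)
    rw [RCLike.re_to_complex, sub_apply, inner_sub_left, Complex.sub_re, re_inner_realPart_apply,
      smul_apply, one_apply_eq_self, inner_smul_left, Complex.conj_ofReal,
      Complex.re_ofReal_mul, ← RCLike.re_to_complex (x := ⟪v, v⟫_ℂ), inner_self_eq_norm_sq, abs_le]
    constructor <;> nlinarith [(hT v).1]
  have him : ‖(ℑ T : H →L[ℂ] H)‖ ≤ s * w := by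
    refine norm_le_of_abs_re_inner_le (ℑ T).2.isSymmetric (by positivity) fun v => ?_
    rw [RCLike.re_to_complex, T.re_inner_imaginaryPart_apply, mul_assoc]
    exact (hT v).2.trans (by gcongr; exact T.norm_inner_apply_self_le_numRadius_mul_sq v)
  calc ‖T - ((w / 2 : ℝ) : ℂ) • 1‖
      ≤ ‖(ℜ T : H →L[ℂ] H) - ((w / 2 : ℝ) : ℂ) • 1‖ + ‖Complex.I • (ℑ T : H →L[ℂ] H)‖ := by
        rw [hdecomp]; exact norm_add_le _ _
    _ ≤ w / 2 + s * w := by rw [norm_smul, Complex.norm_I, one_mul]; gcongr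
    _ = (1 / 2 + s) * w := by ring

end ContinuousLinearMap

theorem stmt5_general {n : ℕ} (A : Matrix (Fin n) (Fin n) ℂ) (α : ℝ)
    (hα : 0 ≤ α ∧ α < Real.pi / 2) (hA : InSector α A)
    (q : ℂ) :
    qNumRadius q (mCLM A) ≤
      (Real.sqrt ((1 - ‖q‖ ^ 2) * (1 + 2 * Real.sin α ^ 2)) + ‖q‖) *
        numRadius (mCLM A) := by
  set T := mCLM A
  have hs : 0 ≤ Real.sin α := Real.sin_nonneg_of_nonneg_of_le_pi hα.1 (by linarith [hα.2])
  have hsector : ∀ v, ⟪v, T v⟫_ℂ ∈ closedSector (Real.sin α) :=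
    T.inner_apply_self_mem_closedSector fun x hx =>
      mem_closedSector_sin hα.1 hα.2 (hA x hx).1.le (hA x hx).2
  calc qNumRadius q T
      ≤ ‖q‖ * numRadius T + √(1 - ‖q‖ ^ 2) * ‖T - ((numRadius T / 2 : ℝ) : ℂ) • 1‖ :=
        T.qNumRadius_le_norm_mul_numRadius_add q _
    _ ≤ ‖q‖ * numRadius T + √(1 - ‖q‖ ^ 2) * (√(1 + 2 * Real.sin α ^ 2) * numRadius T) := by
        gcongr
        exact (T.norm_sub_half_numRadius_smul_one_le hs hsector).trans <|
          mul_le_mul_of_nonneg_right (half_add_le_sqrt_one_add_two_mul_sq _) T.numRadius_nonneg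
    _ = (√((1 - ‖q‖ ^ 2) * (1 + 2 * Real.sin α ^ 2)) + ‖q‖) * numRadius T := by
        rw [Real.sqrt_mul' _ (by positivity)]
        ring

theorem stmt5 {n : ℕ} (A : Matrix (Fin n) (Fin n) ℂ) (α : ℝ)
    (hα : 0 ≤ α ∧ α < Real.pi / 2) (hA : InSector α A)
    (q : ℂ) (hq : ‖q‖ ≤ 1) :
    qNumRadius q (mCLM A) ≤
      (Real.sqrt ((1 - ‖q‖ ^ 2) * (1 + 2 * Real.sin α ^ 2)) + ‖q‖) *
        numRadius (mCLM A) :=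
  stmt5_general A α hα hA q
end
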